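/- Fix p ≥ 1 and ν ∈ W_p(ℝ). The translation map φ on W_p(ℝ) defined on quantile functions by F⁻¹_{φ(μ)} = F⁻¹_μ + F⁻¹_ν is a well-defined isometric embedding of W_p(ℝ) into itself, and φ is bijective if and only if ν is a Dirac mass. -/

import Mathlib

/-!
Every `μ ∈ W_p(ℝ)` is the law of its quantile function `F_μ⁻¹` under Lebesgue measure on
`(0,1)`, and conversely the quantile function of the law of a monotone, right-continuous `g` is
`g` itself. Hence `φ(μ)`, the law of `F_μ⁻¹ + F_ν⁻¹`, has the prescribed quantile function; it
has a finite `p`-th moment because `Lᵖ` is a vector space, and it is isometric because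
`F_{φ(μ₁)}⁻¹ - F_{φ(μ₂)}⁻¹ = F_μ₁⁻¹ - F_μ₂⁻¹`. If `φ(μ) = δ₀` then `F_ν⁻¹ = -F_μ⁻¹` is both
nondecreasing and nonincreasing, hence constant, so `ν` is a Dirac mass; if `ν = δ_c`, translating
by `δ_{-c}` inverts `φ`.
-/

open MeasureTheory Set

noncomputable section

/-- Cumulative distribution function `F_μ(x) = μ((-∞,x])`. -/
def cdfR (μ : Measure ℝ) (x : ℝ) : ℝ := (μ (Set.Iic x)).toReal

/-- Quantile function `F_μ⁻¹(t) = sup {x | F_μ(x) ≤ t}`. -/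
def quantR (μ : Measure ℝ) (t : ℝ) : ℝ := sSup {x : ℝ | cdfR μ x ≤ t}

/-- The Wasserstein space `W_p(ℝ)`: Borel probability measures on `ℝ` with finite
`p`-th moment. -/
def PRp (p : ℝ) : Set (Measure ℝ) :=
  {μ | IsProbabilityMeasure μ ∧ Integrable (fun x => |x| ^ p) μ}

/-- The `p`-Wasserstein distance on `ℝ` via quantile functions. -/
def dWpR (p : ℝ) (μ ν : Measure ℝ) : ℝ :=
  (∫ t in (0:ℝ)..1, |quantR μ t - quantR ν t| ^ p) ^ (1 / p)

open Filter Topology ProbabilityTheory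

abbrev uniform01 : Measure ℝ := volume.restrict (Ioo 0 1)

instance : IsProbabilityMeasure uniform01 := ⟨by simp⟩

lemma map_uniform01_apply_Iic {g : ℝ → ℝ} (hg : AEMeasurable g uniform01) (x : ℝ) :
    uniform01.map g (Iic x) = volume (g ⁻¹' Iic x ∩ Ioo 0 1) := by
  rw [Measure.map_apply_of_aemeasurable hg measurableSet_Iic,
    Measure.restrict_apply' measurableSet_Ioo]

section Quantile

variable {μ : Measure ℝ} [IsProbabilityMeasure μ] {t x : ℝ}

lemma cdfR_eq_cdf : cdfR μ = cdf μ := by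
  ext x
  rw [cdfR, cdf_eq_real, measureReal_def]

lemma nonempty_setOf_cdfR_le (ht : 0 < t) : {x | cdfR μ x ≤ t}.Nonempty := by
  rw [cdfR_eq_cdf]
  exact ((tendsto_cdf_atBot μ).eventually_le_const ht).exists

lemma bddAbove_setOf_cdfR_le (ht : t < 1) : BddAbove {x | cdfR μ x ≤ t} := by
  rw [cdfR_eq_cdf]
  obtain ⟨x₀, hx₀⟩ := ((tendsto_cdf_atTop μ).eventually_const_lt ht).exists
  exact ⟨x₀, fun y hy => ((monotone_cdf μ).reflect_lt (hy.trans_lt hx₀)).le⟩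

lemma quantR_le_of_lt_cdfR (ht : 0 < t) (h : t < cdfR μ x) : quantR μ t ≤ x :=
  csSup_le (nonempty_setOf_cdfR_le ht) fun _ hy =>
    ((cdfR_eq_cdf (μ := μ) ▸ monotone_cdf μ).reflect_lt (lt_of_le_of_lt hy h)).le

lemma lt_quantR_of_cdfR_lt (ht : t < 1) (h : cdfR μ x < t) : x < quantR μ t := by
  have hright : ContinuousWithinAt (cdfR μ) (Ioi x) x :=
    cdfR_eq_cdf (μ := μ) ▸ continuousWithinAt_Ioi_iff_Ici.2 ((cdf μ).right_continuous x)
  obtain ⟨y, hy, hxy⟩ := ((hright.eventually (Iio_mem_nhds h)).and self_mem_nhdsWithin).exists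
  exact hxy.trans_le (le_csSup (bddAbove_setOf_cdfR_le ht) (le_of_lt hy))

lemma le_cdfR_of_quantR_le (ht : t < 1) (h : quantR μ t ≤ x) : t ≤ cdfR μ x := by
  by_contra! hx
  exact (lt_quantR_of_cdfR_lt ht hx).not_ge h

lemma monotoneOn_quantR : MonotoneOn (quantR μ) (Ioo 0 1) := fun _ hs _ ht hst =>
  csSup_le_csSup (bddAbove_setOf_cdfR_le ht.2) (nonempty_setOf_cdfR_le hs.1) fun _ hy =>
    le_trans hy hst

lemma continuousWithinAt_quantR (ht : t ∈ Ioo 0 1) : ContinuousWithinAt (quantR μ) (Ioi t) t := by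
  refine tendsto_order.2 ⟨fun a ha => ?_, fun b hb => ?_⟩
  · filter_upwards [Ioo_mem_nhdsGT ht.2] with s hs
    exact ha.trans_le (monotoneOn_quantR ht ⟨ht.1.trans hs.1, hs.2⟩ hs.1.le)
  · obtain ⟨x, hqx, hxb⟩ := exists_between hb
    have htx : t < cdfR μ x := by
      by_contra! h
      exact (le_csSup (bddAbove_setOf_cdfR_le ht.2) h).not_gt hqx
    filter_upwards [Ioo_mem_nhdsGT htx] with s hs
    exact (quantR_le_of_lt_cdfR (ht.1.trans hs.1) hs.2).trans_lt hxb

lemma aemeasurable_quantR : AEMeasurable (quantR μ) uniform01 :=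
  aemeasurable_restrict_of_monotoneOn measurableSet_Ioo monotoneOn_quantR

lemma map_quantR : uniform01.map (quantR μ) = μ := by
  have := Measure.isProbabilityMeasure_map (aemeasurable_quantR (μ := μ))
  refine Measure.ext_of_Iic _ _ fun x => ?_
  have hlower : Ioo 0 (cdfR μ x) ⊆ quantR μ ⁻¹' Iic x ∩ Ioo 0 1 := fun t ht =>
    ⟨quantR_le_of_lt_cdfR ht.1 ht.2,
      ht.1, ht.2.trans_le (cdfR_eq_cdf (μ := μ) ▸ cdf_le_one μ x)⟩
  have hupper : quantR μ ⁻¹' Iic x ∩ Ioo 0 1 ⊆ Ioc 0 (cdfR μ x) := fun t ht =>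
    ⟨ht.2.1, le_cdfR_of_quantR_le ht.2.2 ht.1⟩
  rw [map_uniform01_apply_Iic aemeasurable_quantR, ← ENNReal.ofReal_toReal (measure_ne_top μ _)]
  refine le_antisymm ((measure_mono hupper).trans_eq ?_) (le_of_eq_of_le ?_ (measure_mono hlower))
  · rw [Real.volume_Ioc, sub_zero, cdfR]
  · rw [Real.volume_Ioo, sub_zero, cdfR]

lemma quantR_map_uniform01 {g : ℝ → ℝ} (hmono : MonotoneOn g (Ioo 0 1))
    (hright : ∀ t ∈ Ioo (0 : ℝ) 1, ContinuousWithinAt g (Ioi t) t) {t : ℝ}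
    (ht : t ∈ Ioo (0 : ℝ) 1) : quantR (uniform01.map g) t = g t := by
  have hg : AEMeasurable g uniform01 := aemeasurable_restrict_of_monotoneOn measurableSet_Ioo hmono
  have hcdf (x : ℝ) : cdfR (uniform01.map g) x = (volume (g ⁻¹' Iic x ∩ Ioo 0 1)).toReal := by
    rw [cdfR, map_uniform01_apply_Iic hg]
  have hbelow (x : ℝ) (hx : x < g t) : cdfR (uniform01.map g) x ≤ t := by
    have hsub : g ⁻¹' Iic x ∩ Ioo 0 1 ⊆ Ioo 0 t := fun s hs =>
      ⟨hs.2.1, lt_of_not_ge fun hts => (hx.trans_le (hmono ht hs.2 hts)).not_ge hs.1⟩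
    rw [hcdf]
    refine ENNReal.toReal_le_of_le_ofReal ht.1.le ((measure_mono hsub).trans ?_)
    rw [Real.volume_Ioo, sub_zero]
  have habove (x : ℝ) (hx : g t < x) : t < cdfR (uniform01.map g) x := by
    obtain ⟨s, hgs, hs⟩ := (((hright t ht).eventually (Iio_mem_nhds hx)).and
      (Ioo_mem_nhdsGT ht.2)).exists
    have hsub : Ioc 0 s ⊆ g ⁻¹' Iic x ∩ Ioo 0 1 := fun r hr => by
      have hr01 : r ∈ Ioo (0 : ℝ) 1 := ⟨hr.1, hr.2.trans_lt hs.2⟩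
      exact ⟨(hmono hr01 ⟨ht.1.trans hs.1, hs.2⟩ hr.2).trans (le_of_lt hgs), hr01⟩
    have hfin : volume (g ⁻¹' Iic x ∩ Ioo 0 1) ≠ ⊤ :=
      ((measure_mono inter_subset_right).trans_lt measure_Ioo_lt_top).ne
    calc t < s := hs.1
      _ = (volume (Ioc 0 s)).toReal := by
        rw [Real.volume_Ioc, sub_zero, ENNReal.toReal_ofReal (ht.1.trans hs.1).le]
      _ ≤ cdfR (uniform01.map g) x := by
        rw [hcdf]
        exact ENNReal.toReal_mono hfin (measure_mono hsub)
  refine csSup_eq_of_forall_le_of_forall_lt_exists_gt ⟨g t - 1, hbelow _ (by linarith)⟩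
    (fun x hx => le_of_not_gt fun hgx => (habove x hgx).not_ge hx) fun w hw => ?_
  obtain ⟨x, hwx, hxg⟩ := exists_between hw
  exact ⟨x, hbelow x hxg, hwx⟩

end Quantile

lemma mem_PRp_iff_memLp {p : ℝ} (hp : 0 < p) {μ : Measure ℝ} :
    μ ∈ PRp p ↔ IsProbabilityMeasure μ ∧ MemLp id (ENNReal.ofReal p) μ := by
  rw [← integrable_norm_rpow_iff aestronglyMeasurable_id (by simpa using hp) ENNReal.ofReal_ne_top,
    ENNReal.toReal_ofReal hp.le]
  rfl

lemma dirac_mem_PRp (p c : ℝ) : Measure.dirac c ∈ PRp p :=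
  ⟨inferInstance, (integrable_const _).congr (ae_eq_dirac _).symm⟩

lemma memLp_quantR {p : ℝ} (hp : 0 < p) {μ : Measure ℝ} (hμ : μ ∈ PRp p) :
    MemLp (quantR μ) (ENNReal.ofReal p) uniform01 := by
  obtain ⟨_, hμLp⟩ := (mem_PRp_iff_memLp hp).1 hμ
  rw [← map_quantR (μ := μ)] at hμLp
  exact (memLp_map_measure_iff aestronglyMeasurable_id aemeasurable_quantR).1 hμLp

lemma map_uniform01_mem_PRp {p : ℝ} (hp : 0 < p) {g : ℝ → ℝ}
    (hg : MemLp g (ENNReal.ofReal p) uniform01) :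
    uniform01.map g ∈ PRp p :=
  (mem_PRp_iff_memLp hp).2 ⟨Measure.isProbabilityMeasure_map hg.aemeasurable,
    (memLp_map_measure_iff aestronglyMeasurable_id hg.aemeasurable).2 hg⟩

lemma map_uniform01_congr {f g : ℝ → ℝ} (h : EqOn f g (Ioo 0 1)) :
    uniform01.map f = uniform01.map g :=
  Measure.map_congr (ae_restrict_of_forall_mem measurableSet_Ioo h)

lemma dirac_eq_map_uniform01 (c : ℝ) : Measure.dirac c = uniform01.map (fun _ => c) := by
  rw [Measure.map_const, measure_univ, one_smul]

lemma quantR_dirac {c t : ℝ} (ht : t ∈ Ioo (0 : ℝ) 1) : quantR (Measure.dirac c) t = c := by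
  rw [dirac_eq_map_uniform01]
  exact quantR_map_uniform01 monotoneOn_const (fun _ _ => continuousWithinAt_const) ht

lemma eq_dirac_of_eqOn_quantR {ν : Measure ℝ} [IsProbabilityMeasure ν] {c : ℝ}
    (h : EqOn (quantR ν) (fun _ => c) (Ioo 0 1)) : ν = Measure.dirac c := by
  rw [← map_quantR (μ := ν), map_uniform01_congr h, dirac_eq_map_uniform01]

lemma exists_eq_dirac_of_quantR_add_eq_const {μ ν : Measure ℝ} [IsProbabilityMeasure μ]
    [IsProbabilityMeasure ν] {a : ℝ} (h : ∀ t ∈ Ioo (0 : ℝ) 1, quantR μ t + quantR ν t = a) :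
    ∃ c, ν = Measure.dirac c := by
  have hhalf : (1 / 2 : ℝ) ∈ Ioo (0 : ℝ) 1 := by norm_num
  refine ⟨quantR ν (1 / 2), eq_dirac_of_eqOn_quantR fun t ht => ?_⟩
  have := h t ht
  have := h _ hhalf
  rcases le_total t (1 / 2) with hle | hle
  · linarith [monotoneOn_quantR (μ := μ) ht hhalf hle, monotoneOn_quantR (μ := ν) ht hhalf hle]
  · linarith [monotoneOn_quantR (μ := μ) hhalf ht hle, monotoneOn_quantR (μ := ν) hhalf ht hle]

lemma dWpR_congr {p : ℝ} {μ₁ μ₂ μ₁' μ₂' : Measure ℝ}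
    (h : ∀ t ∈ Ioo (0 : ℝ) 1, quantR μ₁ t - quantR μ₂ t = quantR μ₁' t - quantR μ₂' t) :
    dWpR p μ₁ μ₂ = dWpR p μ₁' μ₂' := by
  simp only [dWpR, intervalIntegral.integral_of_le zero_le_one, integral_Ioc_eq_integral_Ioo]
  rw [setIntegral_congr_fun measurableSet_Ioo fun t ht => by rw [h t ht]]

def quantileTranslate (ν μ : Measure ℝ) : Measure ℝ :=
  uniform01.map fun t => quantR μ t + quantR ν t

section Translate

variable {ν μ : Measure ℝ}

lemma quantR_quantileTranslate [IsProbabilityMeasure μ] [IsProbabilityMeasure ν] {t : ℝ}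
    (ht : t ∈ Ioo (0 : ℝ) 1) : quantR (quantileTranslate ν μ) t = quantR μ t + quantR ν t :=
  quantR_map_uniform01 (monotoneOn_quantR.add monotoneOn_quantR)
    (fun _ hs => (continuousWithinAt_quantR hs).add (continuousWithinAt_quantR hs)) ht

lemma quantileTranslate_mem_PRp {p : ℝ} (hp : 0 < p) (hμ : μ ∈ PRp p) (hν : ν ∈ PRp p) :
    quantileTranslate ν μ ∈ PRp p :=
  map_uniform01_mem_PRp hp ((memLp_quantR hp hμ).add (memLp_quantR hp hν))

lemma dWpR_quantileTranslate {p : ℝ} [IsProbabilityMeasure ν] (μ₁ μ₂ : Measure ℝ)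
    [IsProbabilityMeasure μ₁] [IsProbabilityMeasure μ₂] :
    dWpR p (quantileTranslate ν μ₁) (quantileTranslate ν μ₂) = dWpR p μ₁ μ₂ :=
  dWpR_congr fun t ht => by
    rw [quantR_quantileTranslate ht, quantR_quantileTranslate ht, add_sub_add_right_eq_sub]

lemma quantileTranslate_dirac_quantileTranslate_dirac_neg [IsProbabilityMeasure μ] (c : ℝ) :
    quantileTranslate (Measure.dirac c) (quantileTranslate (Measure.dirac (-c)) μ) = μ := by
  conv_rhs => rw [← map_quantR (μ := μ)]
  refine map_uniform01_congr fun t ht => ?_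
  simp only [quantR_quantileTranslate ht, quantR_dirac ht, neg_add_cancel_right]

end Translate

/-- For `p ≥ 1` and `ν ∈ W_p(ℝ)`, the translation by `ν`, acting on quantile functions
by `F⁻¹_{φ(μ)} = F⁻¹_μ + F⁻¹_ν`, is a well-defined isometric embedding of `W_p(ℝ)`,
and it is bijective iff `ν` is a Dirac mass. -/
theorem translation_isometric_embedding (p : ℝ) (hp : 1 ≤ p)
    (ν : Measure ℝ) (hν : ν ∈ PRp p) :
    ∃ φ : Measure ℝ → Measure ℝ,
      (∀ μ ∈ PRp p, φ μ ∈ PRp p ∧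
        ∀ t ∈ Set.Ioo (0:ℝ) 1, quantR (φ μ) t = quantR μ t + quantR ν t) ∧
      (∀ μ₁ ∈ PRp p, ∀ μ₂ ∈ PRp p, dWpR p (φ μ₁) (φ μ₂) = dWpR p μ₁ μ₂) ∧
      (Set.SurjOn φ (PRp p) (PRp p) ↔ ∃ c : ℝ, ν = Measure.dirac c) := by
  have hp0 : 0 < p := by linarith
  have := hν.1
  refine ⟨quantileTranslate ν, fun μ hμ => ?_, fun μ₁ h₁ μ₂ h₂ => ?_, fun hsurj => ?_, ?_⟩
  · have := hμ.1
    exact ⟨quantileTranslate_mem_PRp hp0 hμ hν, fun t ht => quantR_quantileTranslate ht⟩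
  · have := h₁.1
    have := h₂.1
    exact dWpR_quantileTranslate μ₁ μ₂
  · obtain ⟨μ, hμ, hμν⟩ := hsurj (dirac_mem_PRp p 0)
    have := hμ.1
    refine exists_eq_dirac_of_quantR_add_eq_const (μ := μ) (a := 0) fun t ht => ?_
    rw [← quantR_quantileTranslate ht, hμν, quantR_dirac ht]
  · rintro ⟨c, rfl⟩ μ hμ
    have := hμ.1
    exact ⟨_, quantileTranslate_mem_PRp hp0 hμ (dirac_mem_PRp p (-c)),
      quantileTranslate_dirac_quantileTranslate_dirac_neg c⟩
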